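/- Let $\lambda$ be a differentiable non-increasing function on $[0,1]$ with $\sup_{t\in[0,1]} \lambda'(t) < -d$ for some $d>0$, and let $\Lambda(t) = \int_0^t \lambda(u)\,du$. Let $g$ be the generalized inverse of $\lambda$ (with $g$ constant on $(-\infty,\lambda(1)]$ and $[\lambda(0),\infty)$, taking values in $[0,1]$). Then for all $u \in [0,1]$ and all $a \in \mathbb{R}$: $\Lambda(u) - \Lambda(g(a)) \leq (u - g(a))\,a - \frac{d}{2}(u - g(a))^2$. -/

import Mathlib

open Set

/-!
Since `λ' ≤ -d`, the function `λ + d • id` is antitone, which makes `Λ` lie below the concave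
parabola `Λ(g) + (u - g) λ(g) - d/2 (u - g)²` around every point `g` of `[0,1]`. The generalized
inverse `g = g(a)` is a maximiser of `t ↦ Λ(t) - t a` on `[0,1]`: `(u - g)(λ(g) - a) ≤ 0` for all
`u ∈ [0,1]`, because `λ(g) = a` when `0 < g < 1` and `λ(g)` lies on the correct side of `a` at the
endpoints. So replacing `λ(g)` by `a` only increases the bound.
-/

/-- Generalized inverse of a nonincreasing function `λ` on `[0,1]`: the greatest
`t ∈ [0,1]` with `λ(t) ≥ a`, with the convention `sup ∅ = 0`. -/
noncomputable def gInv (lam : ℝ → ℝ) (a : ℝ) : ℝ :=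
  sSup {t | t ∈ Icc (0 : ℝ) 1 ∧ a ≤ lam t}

/-- In `ℝ` an unbounded family has `⨆ = 0`, which `c ≤ 0` rules out. -/
theorem lt_of_iSup_lt_of_nonpos {ι : Sort*} {f : ι → ℝ} {c : ℝ} (h : ⨆ i, f i < c)
    (hc : c ≤ 0) (i : ι) : f i < c := by
  have hbdd : BddAbove (range f) := by
    by_contra hunb
    rw [Real.iSup_of_not_bddAbove hunb] at h
    linarith
  exact (le_ciSup hbdd i).trans_lt h

theorem antitoneOn_add_mul_of_hasDerivAt_le {f f' : ℝ → ℝ} {s : Set ℝ} {d : ℝ}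
    (hs : Convex ℝ s) (hf : ∀ x ∈ s, HasDerivAt f (f' x) x) (hle : ∀ x ∈ s, f' x ≤ -d) :
    AntitoneOn (fun x => f x + d * x) s := by
  have hderiv : ∀ x ∈ s, HasDerivAt (fun x => f x + d * x) (f' x + d) x := fun x hx =>
    ((hf x hx).add ((hasDerivAt_id' x).const_mul d)).congr_deriv (by ring)
  refine antitoneOn_of_hasDerivWithinAt_nonpos hs
    (fun x hx => (hderiv x hx).continuousAt.continuousWithinAt)
    (fun x hx => (hderiv x (interior_subset hx)).hasDerivWithinAt) fun x hx => ?_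
  linarith [hle x (interior_subset hx)]

theorem integral_le_sub_mul_of_antitoneOn {φ : ℝ → ℝ} {s u : ℝ}
    (hφ : AntitoneOn φ (uIcc s u)) : ∫ x in s..u, φ x ≤ (u - s) * φ s := by
  have hint := hφ.intervalIntegrable (μ := MeasureTheory.volume)
  rcases le_total s u with hsu | hus
  · calc ∫ x in s..u, φ x ≤ ∫ _ in s..u, φ s :=
          intervalIntegral.integral_mono_on hsu hint intervalIntegrable_const fun x hx =>
            hφ (by simp [hsu]) (by simpa [uIcc_of_le hsu] using hx) hx.1
      _ = (u - s) * φ s := by simp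
  · have hint' : IntervalIntegrable φ MeasureTheory.volume u s := hint.symm
    have hge : ∫ _ in u..s, φ s ≤ ∫ x in u..s, φ x :=
      intervalIntegral.integral_mono_on hus intervalIntegrable_const hint' fun x hx =>
        hφ (by simpa [uIcc_of_ge hus] using hx) (by simp [hus]) hx.2
    rw [intervalIntegral.integral_symm, intervalIntegral.integral_const] at *
    simp only [smul_eq_mul] at hge
    linarith

theorem integral_le_of_antitoneOn_add_mul {f : ℝ → ℝ} {d s u : ℝ}
    (hf : AntitoneOn (fun x => f x + d * x) (uIcc s u)) :
    ∫ x in s..u, f x ≤ (u - s) * f s - d / 2 * (u - s) ^ 2 := by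
  have hlin : IntervalIntegrable (fun x => d * x) MeasureTheory.volume s u :=
    (continuous_const.mul continuous_id).intervalIntegrable s u
  have hsplit : ∫ x in s..u, f x = (∫ x in s..u, (f x + d * x)) - ∫ x in s..u, d * x := by
    rw [intervalIntegral.integral_add _ hlin]
    · ring
    · simpa using (hf.intervalIntegrable (μ := MeasureTheory.volume)).sub hlin
  rw [hsplit, intervalIntegral.integral_const_mul, integral_id]
  nlinarith [integral_le_sub_mul_of_antitoneOn hf]

theorem gInv_mem_Icc (lam : ℝ → ℝ) (a : ℝ) : gInv lam a ∈ Icc (0 : ℝ) 1 :=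
  ⟨Real.sSup_nonneg fun _ ht => ht.1.1, Real.sSup_le (fun _ ht => ht.1.2) zero_le_one⟩

theorem le_apply_gInv {lam : ℝ → ℝ} {a : ℝ} (hlam : ContinuousOn lam (Icc 0 1))
    (hpos : 0 < gInv lam a) : a ≤ lam (gInv lam a) := by
  set S := {t | t ∈ Icc (0 : ℝ) 1 ∧ a ≤ lam t}
  have hne : S.Nonempty := by
    by_contra hempty
    rw [not_nonempty_iff_eq_empty] at hempty
    rw [show gInv lam a = sSup S from rfl, hempty, Real.sSup_empty] at hpos
    exact hpos.false
  have hclosed : IsClosed S := hlam.preimage_isClosed_of_isClosed isClosed_Icc isClosed_Ici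
  exact (hclosed.csSup_mem hne ⟨1, fun _ ht => ht.1.2⟩).2

theorem apply_gInv_le {lam : ℝ → ℝ} {a : ℝ} (hlam : ContinuousOn lam (Icc 0 1))
    (hlt : gInv lam a < 1) : lam (gInv lam a) ≤ a := by
  set g := gInv lam a
  have hg := gInv_mem_Icc lam a
  have hright : Ioc g 1 ⊆ Icc 0 1 := fun t ht => ⟨hg.1.trans ht.1.le, ht.2⟩
  have habove : ∀ t ∈ Ioc g 1, lam t ≤ a := fun t ht => by
    by_contra! hat
    exact notMem_of_csSup_lt ht.1 ⟨1, fun _ hs => hs.1.2⟩ ⟨hright ht, hat.le⟩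
  refine ContinuousWithinAt.closure_le (by simp [closure_Ioc hlt.ne, hlt.le])
    ((hlam g hg).mono hright) continuousWithinAt_const habove

theorem sub_mul_sub_apply_gInv_nonpos {lam : ℝ → ℝ} {a u : ℝ}
    (hlam : ContinuousOn lam (Icc 0 1)) (hu : u ∈ Icc (0 : ℝ) 1) :
    (u - gInv lam a) * (lam (gInv lam a) - a) ≤ 0 := by
  rcases le_total u (gInv lam a) with hug | hgu
  · rcases hug.eq_or_lt with heq | hlt
    · simp [heq]
    · exact mul_nonpos_of_nonpos_of_nonneg (by linarith)
        (sub_nonneg.2 (le_apply_gInv hlam (hu.1.trans_lt hlt)))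
  · rcases hgu.eq_or_lt with heq | hlt
    · simp [heq]
    · exact mul_nonpos_of_nonneg_of_nonpos (by linarith)
        (sub_nonpos.2 (apply_gInv_le hlam (hlt.trans_le hu.2)))

theorem concave_taylor_bound_general (lam lam' : ℝ → ℝ) (d : ℝ) (hd : 0 < d)
    (hderiv : ∀ t ∈ Icc (0 : ℝ) 1, HasDerivAt lam (lam' t) t)
    (hsup : (⨆ t : Icc (0 : ℝ) 1, lam' t) < -d) :
    ∀ u ∈ Icc (0 : ℝ) 1, ∀ a : ℝ,
      (∫ x in (0 : ℝ)..u, lam x) - (∫ x in (0 : ℝ)..(gInv lam a), lam x)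
        ≤ (u - gInv lam a) * a - d / 2 * (u - gInv lam a) ^ 2 := by
  intro u hu a
  have hcont : ContinuousOn lam (Icc 0 1) := fun t ht =>
    (hderiv t ht).continuousAt.continuousWithinAt
  have hslope : AntitoneOn (fun x => lam x + d * x) (Icc 0 1) :=
    antitoneOn_add_mul_of_hasDerivAt_le (convex_Icc 0 1) hderiv fun t ht =>
      (lt_of_iSup_lt_of_nonpos hsup (by linarith) ⟨t, ht⟩).le
  have hg := gInv_mem_Icc lam a
  have hint : ∀ t ∈ Icc (0 : ℝ) 1, IntervalIntegrable lam MeasureTheory.volume 0 t :=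
    fun t ht => (hcont.mono (uIcc_subset_Icc (left_mem_Icc.2 zero_le_one) ht)).intervalIntegrable
  rw [intervalIntegral.integral_interval_sub_left (hint u hu) (hint _ hg)]
  have hbound := integral_le_of_antitoneOn_add_mul (hslope.mono (uIcc_subset_Icc hg hu))
  have hsign := sub_mul_sub_apply_gInv_nonpos (a := a) hcont hu
  linear_combination hbound + hsign

/-- Taylor-type concavity bound: if `λ` is differentiable on `[0,1]` with
`sup_{t∈[0,1]} λ'(t) < -d`, `Λ(t) = ∫₀ᵗ λ`, and `g` is the generalized inverse
of `λ`, then `Λ(u) - Λ(g(a)) ≤ (u - g(a)) a - (d/2)(u - g(a))²` for all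
`u ∈ [0,1]` and all real `a`. -/
theorem concave_taylor_bound (lam lam' : ℝ → ℝ) (d : ℝ) (hd : 0 < d)
    (hderiv : ∀ t ∈ Icc (0 : ℝ) 1, HasDerivAt lam (lam' t) t)
    (hanti : AntitoneOn lam (Icc (0 : ℝ) 1))
    (hsup : (⨆ t : Icc (0 : ℝ) 1, lam' t) < -d) :
    ∀ u ∈ Icc (0 : ℝ) 1, ∀ a : ℝ,
      (∫ x in (0 : ℝ)..u, lam x) - (∫ x in (0 : ℝ)..(gInv lam a), lam x)
        ≤ (u - gInv lam a) * a - d / 2 * (u - gInv lam a) ^ 2 :=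
  concave_taylor_bound_general lam lam' d hd hderiv hsup
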